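/- arXiv:2112.03834 — 3 statements merged into one kernel-verified Lean document; each statement's English description precedes it below -/
import Mathlib

section
/- Let r_1,...,r_m be positive real numbers and μ_1,...,μ_m real numbers with μ_1 ≥ μ_2 ≥ ... ≥ μ_m. Set r = r_1 + ... + r_m and μ = (r_1μ_1 + ... + r_mμ_m)/r. Then ∑_{i<j} r_i r_j (μ_i - μ_j)^2 ≤ r^2 (μ_1 - μ)(μ - μ_m). -/
/-- Elementary inequality: for positive weights `r i` and non-increasing reals `μ i`,
with `R = ∑ r i` and weighted average `μbar`, one has
`∑_{i<j} r i * r j * (μ i - μ j)^2 ≤ R^2 * (μ 0 - μbar) * (μbar - μ (m-1))`. -/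
theorem stmt_0 (m : ℕ) (hm : 0 < m) (r μ : Fin m → ℝ)
    (hr : ∀ i, 0 < r i) (hμ : Antitone μ)
    (R : ℝ) (hR : R = ∑ i, r i)
    (μbar : ℝ) (hμbar : μbar = (∑ i, r i * μ i) / R) :
    (∑ i, ∑ j, if i < j then r i * r j * (μ i - μ j) ^ 2 else 0)
      ≤ R ^ 2 * (μ ⟨0, hm⟩ - μbar) * (μbar - μ ⟨m - 1, Nat.sub_lt hm one_pos⟩) := by
  set a := μ ⟨0, hm⟩ with ha
  set b := μ ⟨m - 1, Nat.sub_lt hm one_pos⟩ with hb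
  have hRpos : 0 < R := by
    rw [hR]; exact Finset.sum_pos (fun i _ => hr i) (@Finset.univ_nonempty (Fin m) _ (Fin.pos_iff_nonempty.mp hm))
  have hsum : ∑ i, r i * μ i = R * μbar := by
    rw [hμbar]; field_simp
  have hai : ∀ i : Fin m, μ i ≤ a := fun i =>
    hμ (show (⟨0, hm⟩ : Fin m) ≤ i by simp [Fin.le_def])
  have hbi : ∀ i : Fin m, b ≤ μ i := fun i =>
    hμ (show i ≤ (⟨m - 1, Nat.sub_lt hm one_pos⟩ : Fin m) by
      simp [Fin.le_def]; omega)
  have step1 : (∑ i, ∑ j, if i < j then r i * r j * (μ i - μ j) ^ 2 else 0)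
      ≤ ∑ i, ∑ j, r i * (μ i - b) * (r j * (a - μ j)) := by
    refine Finset.sum_le_sum fun i _ => Finset.sum_le_sum fun j _ => ?_
    by_cases h : i < j
    · simp only [if_pos h]
      have h1 : 0 ≤ μ i - μ j := sub_nonneg.2 (hμ h.le)
      have h2 : μ i - μ j ≤ a - μ j := by linarith [hai i]
      have h3 : μ i - μ j ≤ μ i - b := by linarith [hbi j]
      have := mul_le_mul h3 h2 h1 (by linarith)
      nlinarith [mul_pos (hr i) (hr j)]
    · simp only [if_neg h]
      have := (hr i).le
      have := (hr j).le
      have := hai j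
      have := hbi i
      have h5 : 0 ≤ a - μ j := by linarith
      have h6 : 0 ≤ μ i - b := by linarith
      positivity
  have step2 : (∑ i, ∑ j, r i * (μ i - b) * (r j * (a - μ j)))
      = (∑ i, r i * (μ i - b)) * (∑ j, r j * (a - μ j)) := by
    rw [Finset.sum_mul_sum]
  have e1 : (∑ i, r i * (μ i - b)) = R * μbar - R * b := by
    simp only [mul_sub]
    rw [Finset.sum_sub_distrib, hsum, ← Finset.sum_mul, ← hR]
  have e2 : (∑ j, r j * (a - μ j)) = R * a - R * μbar := by
    simp only [mul_sub]
    rw [Finset.sum_sub_distrib, hsum, ← Finset.sum_mul, ← hR, mul_comm R a]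
  calc (∑ i, ∑ j, if i < j then r i * r j * (μ i - μ j) ^ 2 else 0)
      ≤ (∑ i, r i * (μ i - b)) * (∑ j, r j * (a - μ j)) := step1.trans_eq step2
    _ = R ^ 2 * (a - μbar) * (μbar - b) := by rw [e1, e2]; ring
end

section
/- Let r_1,...,r_m be positive real numbers and μ_1,...,μ_m real numbers, and set r = r_1 + ... + r_m. Then ∑_{i<j} r_i r_j (μ_i - μ_j)^2 ≥ (r_1 r_m/(r_1 + r_m)) · r · (μ_1 - μ_m)^2. -/
/-!
Let `a` and `b` be the first and last index and `c = r_a r_b / (r_a + r_b) · (μ_a - μ_b)²`.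
The pair `{a, b}` contributes `r_a r_b (μ_a - μ_b)² = c (r_a + r_b)`, and every other index `k`
lies strictly between them, so the pairs `{a, k}` and `{k, b}` together contribute at least
`c r_k`: this is the weighted Cauchy–Schwarz inequality
`p q / (p + q) · (x + y)² ≤ p x² + q y²` with `x = μ_a - μ_k`, `y = μ_k - μ_b`.
Summing over `k` gives `c (r_1 + ⋯ + r_m)`.
-/

open Finset

theorem mul_div_add_mul_sq_add_le {p q : ℝ} (hp : 0 ≤ p) (hq : 0 ≤ q) (x y : ℝ) :
    p * q / (p + q) * (x + y) ^ 2 ≤ p * x ^ 2 + q * y ^ 2 := by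
  rcases (add_nonneg hp hq).eq_or_lt with hpq | hpq
  · rw [← hpq, div_zero, zero_mul]
    positivity
  · rw [div_mul_eq_mul_div, div_le_iff₀ hpq]
    -- `(p + q) (p x² + q y²) - p q (x + y)² = (p x - q y)²`
    nlinarith [sq_nonneg (p * x - q * y)]

theorem Finset.add_sum_add_le_sum_sum {ι : Type*} [Fintype ι] [DecidableEq ι]
    {F : ι → ι → ℝ} (hF : ∀ i j, 0 ≤ F i j) {a b : ι} (hab : a ≠ b) :
    F a b + ∑ k ∈ (univ.erase a).erase b, (F a k + F k b) ≤ ∑ i, ∑ j, F i j := by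
  have hb : b ∈ univ.erase a := mem_erase.mpr ⟨hab.symm, mem_univ b⟩
  have row : F a b + ∑ k ∈ (univ.erase a).erase b, F a k ≤ ∑ j, F a j := by
    rw [add_sum_erase _ _ hb]
    exact sum_le_sum_of_subset_of_nonneg (subset_univ _) fun j _ _ ↦ hF a j
  have column : ∑ k ∈ (univ.erase a).erase b, F k b ≤ ∑ i ∈ univ.erase a, ∑ j, F i j :=
    calc ∑ k ∈ (univ.erase a).erase b, F k b
        ≤ ∑ i ∈ univ.erase a, F i b :=
          sum_le_sum_of_subset_of_nonneg (erase_subset _ _) fun i _ _ ↦ hF i b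
      _ ≤ ∑ i ∈ univ.erase a, ∑ j, F i j :=
          sum_le_sum fun i _ ↦ single_le_sum (fun j _ ↦ hF i j) (mem_univ b)
  rw [sum_add_distrib, ← add_assoc, ← add_sum_erase _ _ (mem_univ a)]
  exact add_le_add row column

theorem langer_inequality {ι : Type*} [Fintype ι] [LinearOrder ι] {r : ι → ℝ}
    (hr : ∀ i, 0 ≤ r i) (μ : ι → ℝ) {a b : ι} (ha : ∀ k, a ≤ k) (hb : ∀ k, k ≤ b) :
    r a * r b / (r a + r b) * (∑ i, r i) * (μ a - μ b) ^ 2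
      ≤ ∑ i, ∑ j, if i < j then r i * r j * (μ i - μ j) ^ 2 else 0 := by
  have hF : ∀ i j, 0 ≤ if i < j then r i * r j * (μ i - μ j) ^ 2 else 0 := fun i j ↦ by
    split_ifs
    exacts [mul_nonneg (mul_nonneg (hr i) (hr j)) (sq_nonneg _), le_rfl]
  rcases (ha b).eq_or_lt with rfl | hab
  · rw [sub_self, zero_pow two_ne_zero, mul_zero]
    exact sum_nonneg fun i _ ↦ sum_nonneg fun j _ ↦ hF i j
  set c := r a * r b / (r a + r b) * (μ a - μ b) ^ 2
  set U := (univ.erase a).erase b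
  have hpair : c * (r a + r b) = r a * r b * (μ a - μ b) ^ 2 := by
    rcases (add_nonneg (hr a) (hr b)).eq_or_lt with h | h
    · have ha0 : r a = 0 := by linarith [hr a, hr b]
      simp [c, ha0]
    · simp only [c]
      field_simp
  have hmiddle : ∀ k ∈ U, c * r k ≤ r a * r k * (μ a - μ k) ^ 2 + r k * r b * (μ k - μ b) ^ 2 :=
    fun k _ ↦ by
      have := mul_le_mul_of_nonneg_right
        (mul_div_add_mul_sq_add_le (hr a) (hr b) (μ a - μ k) (μ k - μ b)) (hr k)
      rw [sub_add_sub_cancel] at this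
      linarith
  have hsplit : ∑ i, r i = r a + r b + ∑ k ∈ U, r k := by
    rw [← add_sum_erase _ _ (mem_univ a),
      ← add_sum_erase _ _ (mem_erase.mpr ⟨hab.ne', mem_univ b⟩), add_assoc]
  calc r a * r b / (r a + r b) * (∑ i, r i) * (μ a - μ b) ^ 2
      = c * (r a + r b) + ∑ k ∈ U, c * r k := by
        rw [hsplit, ← mul_sum]
        ring
    _ ≤ r a * r b * (μ a - μ b) ^ 2
          + ∑ k ∈ U, (r a * r k * (μ a - μ k) ^ 2 + r k * r b * (μ k - μ b) ^ 2) := by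
        rw [hpair]
        gcongr with k hk
        exact hmiddle k hk
    _ = (if a < b then r a * r b * (μ a - μ b) ^ 2 else 0)
          + ∑ k ∈ U, ((if a < k then r a * r k * (μ a - μ k) ^ 2 else 0)
            + if k < b then r k * r b * (μ k - μ b) ^ 2 else 0) := by
        refine congrArg₂ _ (if_pos hab).symm (sum_congr rfl fun k hk ↦ ?_)
        simp only [U, mem_erase] at hk
        obtain ⟨hkb, hka, -⟩ := hk
        rw [if_pos ((ha k).lt_of_ne hka.symm), if_pos ((hb k).lt_of_ne hkb)]
    _ ≤ ∑ i, ∑ j, if i < j then r i * r j * (μ i - μ j) ^ 2 else 0 :=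
        add_sum_add_le_sum_sum hF hab.ne

/-- Langer's elementary inequality (Lemma 1.3): for positive reals `r i` and reals `μ i`,
with `R = ∑ r i`,
`∑_{i<j} r i * r j * (μ i - μ j)^2 ≥ (r 0 * r (m-1) / (r 0 + r (m-1))) * R * (μ 0 - μ (m-1))^2`. -/
theorem stmt_1 (m : ℕ) (hm : 0 < m) (r μ : Fin m → ℝ)
    (hr : ∀ i, 0 < r i)
    (R : ℝ) (hR : R = ∑ i, r i) :
    r ⟨0, hm⟩ * r ⟨m - 1, Nat.sub_lt hm one_pos⟩ /
        (r ⟨0, hm⟩ + r ⟨m - 1, Nat.sub_lt hm one_pos⟩) * R *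
        (μ ⟨0, hm⟩ - μ ⟨m - 1, Nat.sub_lt hm one_pos⟩) ^ 2
      ≤ ∑ i, ∑ j, if i < j then r i * r j * (μ i - μ j) ^ 2 else 0 := by
  subst hR
  refine langer_inequality (fun i ↦ (hr i).le) μ (fun k ↦ ?_) (fun k ↦ ?_)
  all_goals rw [Fin.le_def]; dsimp only; omega
end

section
/- Let D be a set of polynomials of degree at most n with real coefficients lying in (1/N)·ℤ for a fixed positive integer N, with all coefficients bounded above, ordered lexicographically by coefficients (constant term first). Then P ∈ D is the unique maximum of D in the lexicographic order if and only if there exists ε > 0 such that P(t) > Q(t) for all 0 < t < ε and all Q ∈ D with Q ≠ P. -/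
/-!
For `0 < t ≤ 1`, a polynomial whose lowest nonzero coefficient is at least `δ > 0` and whose
coefficients are all at least `-C` is positive at `t` as soon as `C n t < δ`: the lowest term
`δ tⁱ` beats the tail, which is at least `-n C tⁱ⁺¹`. Applied to `P - Q`, the lexicographic
maximality of `P` gives the lowest coefficient, and the coefficient set `(1/N)ℤ` makes it at least
`1/N`; together with the upper bound on coefficients this makes the threshold uniform in `Q`.
Conversely, if some `Q ≠ P` were not lexicographically below `P`, then `Q - P` would be positive
for arbitrarily small `t`.
-/

open Finset

/-- Coefficientwise lexicographic order on polynomials encoded by their coefficient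
functions (constant term first): `LexLt f g` iff `f < g`, i.e. there is an index `i`
with `f j = g j` for all `j < i` and `f i < g i`. -/
def LexLt (f g : ℕ → ℝ) : Prop := ∃ i : ℕ, (∀ j < i, f j = g j) ∧ f i < g i

/-- Evaluation of a polynomial of degree at most `n` with coefficient function `f`. -/
noncomputable def evalPoly (n : ℕ) (f : ℕ → ℝ) (t : ℝ) : ℝ :=
  ∑ i ∈ Finset.range (n + 1), f i * t ^ i

lemma evalPoly_sub (n : ℕ) (f g : ℕ → ℝ) (t : ℝ) :
    evalPoly n f t - evalPoly n g t = evalPoly n (f - g) t := by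
  simp only [evalPoly, ← sum_sub_distrib, Pi.sub_apply, sub_mul]

lemma abs_le_sum_range_abs {n : ℕ} {f : ℕ → ℝ} (hf : ∀ i, n < i → f i = 0) (i : ℕ) :
    |f i| ≤ ∑ j ∈ range (n + 1), |f j| := by
  rcases le_or_gt i n with hi | hi
  · exact single_le_sum (f := fun j => |f j|) (fun _ _ => abs_nonneg _)
      (mem_range.mpr (Nat.lt_succ_of_le hi))
  · rw [hf i hi, abs_zero]
    exact sum_nonneg fun _ _ => abs_nonneg _

lemma lexLt_or_lexLt_of_ne {f g : ℕ → ℝ} (hne : f ≠ g) : LexLt f g ∨ LexLt g f := by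
  classical
  have hex : ∃ i, f i ≠ g i := Function.ne_iff.mp hne
  have hmin : ∀ j < Nat.find hex, f j = g j := fun j hj => not_not.mp (Nat.find_min hex hj)
  rcases (Nat.find_spec hex).lt_or_gt with h | h
  · exact .inl ⟨_, hmin, h⟩
  · exact .inr ⟨_, fun j hj => (hmin j hj).symm, h⟩

lemma le_of_apply_lt_of_eq_zero {n i : ℕ} {f g : ℕ → ℝ} (hf : ∀ j, n < j → f j = 0)
    (hg : ∀ j, n < j → g j = 0) (hlt : f i < g i) : i ≤ n :=
  le_of_not_gt fun hi => hlt.ne (by rw [hf i hi, hg i hi])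

lemma add_one_div_le_of_lt {N : ℕ} (hN : 0 < N) {k l : ℤ} (h : (k : ℝ) / N < l / N) :
    (k : ℝ) / N + 1 / N ≤ l / N := by
  have hN' : (0 : ℝ) < N := by exact_mod_cast hN
  have hkl : k + 1 ≤ l := by exact_mod_cast (div_lt_div_iff_of_pos_right hN').mp h
  rw [← add_div]
  gcongr
  exact_mod_cast hkl

lemma evalPoly_pos_of_lowest_coeff {n i : ℕ} {h : ℕ → ℝ} {δ C t : ℝ} (hi : i ≤ n)
    (hlow : ∀ j < i, h j = 0) (hδ : δ ≤ h i) (hC : 0 ≤ C) (hCh : ∀ j, -C ≤ h j)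
    (ht : 0 < t) (htε : t < min 1 (δ / (C * n + 1))) : 0 < evalPoly n h t := by
  have ht1 : t ≤ 1 := (htε.trans_le (min_le_left _ _)).le
  have htδ : t * (C * n + 1) < δ :=
    (lt_div_iff₀ (by positivity)).mp (htε.trans_le (min_le_right _ _))
  have hterm : ∀ j ∈ (range (n + 1)).erase i, -(C * t ^ (i + 1)) ≤ h j * t ^ j := by
    intro j hj
    rcases (ne_of_mem_erase hj).lt_or_gt with hji | hij
    · rw [hlow j hji, zero_mul, neg_nonpos]
      positivity
    · calc -(C * t ^ (i + 1)) ≤ -(C * t ^ j) :=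
            neg_le_neg (mul_le_mul_of_nonneg_left (pow_le_pow_of_le_one ht.le ht1 hij) hC)
        _ = -C * t ^ j := by ring
        _ ≤ h j * t ^ j := by gcongr; exact hCh j
  have htail : -(n * (C * t ^ (i + 1))) ≤ ∑ j ∈ (range (n + 1)).erase i, h j * t ^ j := by
    have := card_nsmul_le_sum _ _ _ hterm
    rw [card_erase_of_mem (mem_range.mpr (Nat.lt_succ_of_le hi)), card_range,
      Nat.succ_sub_one, nsmul_eq_mul] at this
    linarith
  have hhead : δ * t ^ i ≤ h i * t ^ i := by gcongr
  have hgap : 0 < δ - C * n * t := by nlinarith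
  calc 0 < t ^ i * (δ - C * n * t) := by positivity
    _ = δ * t ^ i + -(n * (C * t ^ (i + 1))) := by ring
    _ ≤ h i * t ^ i + ∑ j ∈ (range (n + 1)).erase i, h j * t ^ j := add_le_add hhead htail
    _ = evalPoly n h t :=
      add_sum_erase _ (fun j => h j * t ^ j) (mem_range.mpr (Nat.lt_succ_of_le hi))

lemma evalPoly_lt_evalPoly_of_lex_gap {n i : ℕ} {f g : ℕ → ℝ} {δ C t : ℝ} (hi : i ≤ n)
    (heq : ∀ j < i, f j = g j) (hgap : f i + δ ≤ g i) (hC : 0 ≤ C)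
    (hfg : ∀ j, f j - g j ≤ C) (ht : 0 < t) (htε : t < min 1 (δ / (C * n + 1))) :
    evalPoly n f t < evalPoly n g t := by
  rw [← sub_pos, evalPoly_sub]
  refine evalPoly_pos_of_lowest_coeff hi (fun j hj => ?_) ?_ hC (fun j => ?_) ht htε
  · simp [heq j hj]
  · simp only [Pi.sub_apply]; linarith
  · simp only [Pi.sub_apply]; linarith [hfg j]

/-- Let `D` be a set of polynomials of degree at most `n` with coefficients in `(1/N)·ℤ`
and bounded above. Then `P ∈ D` is the unique maximum of `D` for the lexicographic order
iff `P(t) > Q(t)` for all other `Q ∈ D` and all sufficiently small `t > 0`. -/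
theorem stmt_19 (n N : ℕ) (hN : 0 < N) (D : Set (ℕ → ℝ))
    (hdeg : ∀ f ∈ D, ∀ i : ℕ, n < i → f i = 0)
    (hcoef : ∀ f ∈ D, ∀ i : ℕ, ∃ k : ℤ, f i = (k : ℝ) / (N : ℝ))
    (hbdd : ∃ M : ℝ, ∀ f ∈ D, ∀ i : ℕ, f i ≤ M)
    (P : ℕ → ℝ) (hP : P ∈ D) :
    (∀ Q ∈ D, Q ≠ P → LexLt Q P) ↔
      ∃ ε > 0, ∀ t : ℝ, 0 < t → t < ε →
        ∀ Q ∈ D, Q ≠ P → evalPoly n Q t < evalPoly n P t := by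
  constructor
  · intro hlex
    obtain ⟨M, hM⟩ := hbdd
    set C := |M| + ∑ j ∈ range (n + 1), |P j|
    have hC : 0 ≤ C := by positivity
    refine ⟨min 1 ((1 / N) / (C * n + 1)), by positivity, fun t ht htε Q hQ hQP => ?_⟩
    obtain ⟨i, heq, hlt⟩ := hlex Q hQ hQP
    obtain ⟨k, hk⟩ := hcoef Q hQ i
    obtain ⟨l, hl⟩ := hcoef P hP i
    refine evalPoly_lt_evalPoly_of_lex_gap (le_of_apply_lt_of_eq_zero (hdeg Q hQ) (hdeg P hP) hlt)
      heq ?_ hC (fun j => ?_) ht htε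
    · rw [hk, hl] at hlt ⊢
      exact add_one_div_le_of_lt hN hlt
    · linarith [hM Q hQ j, le_abs_self M, neg_abs_le (P j), abs_le_sum_range_abs (hdeg P hP) j]
  · rintro ⟨ε, hε, hval⟩ Q hQ hQP
    refine (lexLt_or_lexLt_of_ne hQP).resolve_right fun ⟨i, heq, hlt⟩ => ?_
    set C := ∑ j ∈ range (n + 1), |P j| + ∑ j ∈ range (n + 1), |Q j|
    have hC : 0 ≤ C := by positivity
    have hη : 0 < min 1 ((Q i - P i) / (C * n + 1)) := by
      have := sub_pos.mpr hlt
      positivity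
    obtain ⟨t, ht, htε⟩ := exists_between (lt_min hε hη)
    refine (hval t ht (htε.trans_le (min_le_left _ _)) Q hQ hQP).not_ge
      (evalPoly_lt_evalPoly_of_lex_gap (le_of_apply_lt_of_eq_zero (hdeg P hP) (hdeg Q hQ) hlt)
        heq (by linarith) hC (fun j => ?_) ht (htε.trans_le (min_le_right _ _))).le
    linarith [neg_abs_le (Q j), le_abs_self (P j), abs_le_sum_range_abs (hdeg P hP) j,
      abs_le_sum_range_abs (hdeg Q hQ) j]
end
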